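/- arXiv:2405.07908 — 3 statements merged into one kernel-verified Lean document; each statement's English description precedes it below -/
import Mathlib

section
/- (Unique arc transition between two planar states.) Let (x₀, ψ₀) and (x_G, ψ_G) be two planar states in ℝ² × ℝ with Δψ := ψ_G − ψ₀ ∈ [−π, π). Define the 2×2 matrix M(ψ₀, Δψ) = (1/Δψ) · (Rot(ψ₀ + Δψ − π/2) − Rot(ψ₀ − π/2)) if Δψ ≠ 0 and M(ψ₀, 0) = Rot(ψ₀). Then there exists a unique vector u ∈ ℝ² such that x_G = x₀ + M(ψ₀, Δψ) u. Consequently, for any duration t̄ > 0 there is exactly one constant body-frame velocity p = (v, ω) with ω t̄ = Δψ and v t̄ = u whose induced state trajectory carries (x₀, ψ₀) to (x_G, ψ_G) at time t̄. -/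
open Real Matrix

/-- The planar rotation matrix `Rot θ = [[cos θ, −sin θ],[sin θ, cos θ]]`. -/
noncomputable def Rot (θ : ℝ) : Matrix (Fin 2) (Fin 2) ℝ :=
  !![Real.cos θ, -Real.sin θ; Real.sin θ, Real.cos θ]

/-- The matrix `M(ψ₀, Δψ)` governing an arc transition: for `Δψ ≠ 0` it is
`(1/Δψ) • (Rot (ψ₀ + Δψ − π/2) − Rot (ψ₀ − π/2))`, and `M(ψ₀, 0) = Rot ψ₀`. -/
noncomputable def arcMat (ψ₀ Δψ : ℝ) : Matrix (Fin 2) (Fin 2) ℝ :=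
  if Δψ = 0 then Rot ψ₀ else (1 / Δψ) • (Rot (ψ₀ + Δψ - π / 2) - Rot (ψ₀ - π / 2))

/-! Since `Rot (θ - π / 2)` is an antiderivative of `Rot θ`, the trajectory with constant
rates `(u / T, Δψ / T)` is at `x₀ + M(ψ₀, Δψ) u` at time `T`. Moreover
`det M(ψ₀, Δψ) = 2 (1 - cos Δψ) / Δψ²` for `Δψ ≠ 0`, which does not vanish for
`0 < |Δψ| < 2π`, so `M(ψ₀, Δψ)` is invertible and `u` is determined by `x_G - x₀`; the rates
are then forced by `ω T = Δψ` and `v T = u`. -/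

theorem existsUnique_eq_add_mulVec {n R : Type*} [Fintype n] [DecidableEq n] [CommRing R]
    {M : Matrix n n R} (hM : IsUnit M.det) (x y : n → R) : ∃! u, y = x + M *ᵥ u := by
  refine ⟨M⁻¹ *ᵥ (y - x), by simp [mulVec_mulVec, mul_nonsing_inv _ hM], fun u hu => ?_⟩
  rw [hu, add_sub_cancel_left, mulVec_mulVec, nonsing_inv_mul _ hM, one_mulVec]

theorem hasDerivAt_Rot_mulVec (v : Fin 2 → ℝ) (θ : ℝ) :
    HasDerivAt (fun θ => Rot θ *ᵥ v) (Rot (θ + π / 2) *ᵥ v) θ := by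
  rw [hasDerivAt_pi]
  intro i
  fin_cases i
  · convert ((hasDerivAt_cos θ).mul_const (v 0)).sub ((hasDerivAt_sin θ).mul_const (v 1))
      using 1 <;>
    simp [Rot, mulVec, dotProduct, Fin.sum_univ_two, cos_add_pi_div_two, sin_add_pi_div_two,
      sub_eq_add_neg, Pi.add_def, Pi.neg_def]
  · convert ((hasDerivAt_sin θ).mul_const (v 0)).add ((hasDerivAt_cos θ).mul_const (v 1))
      using 1 <;>
    simp [Rot, mulVec, dotProduct, Fin.sum_univ_two, cos_add_pi_div_two, sin_add_pi_div_two,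
      Pi.add_def]

theorem continuous_Rot_mulVec (v : Fin 2 → ℝ) : Continuous fun θ => Rot θ *ᵥ v :=
  continuous_iff_continuousAt.2 fun θ => (hasDerivAt_Rot_mulVec v θ).continuousAt

theorem integral_Rot_mulVec (v : Fin 2 → ℝ) (a b : ℝ) :
    ∫ θ in a..b, Rot θ *ᵥ v = (Rot (b - π / 2) - Rot (a - π / 2)) *ᵥ v := by
  rw [sub_mulVec]
  refine intervalIntegral.integral_eq_sub_of_hasDerivAt (f := fun θ => Rot (θ - π / 2) *ᵥ v)
    (fun θ _ => ?_) ((continuous_Rot_mulVec v).intervalIntegrable a b)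
  simpa using (hasDerivAt_Rot_mulVec v (θ - π / 2)).comp_sub_const θ (π / 2)

theorem det_Rot (θ : ℝ) : (Rot θ).det = 1 := by
  simp [Rot, det_fin_two_of, ← sq, cos_sq_add_sin_sq]

theorem det_Rot_sub_Rot (α β : ℝ) : (Rot α - Rot β).det = 2 - 2 * cos (α - β) := by
  rw [det_fin_two]
  simp only [Rot, Matrix.sub_apply, of_apply, cons_val', cons_val_zero, cons_val_fin_one,
    cons_val_one, sub_neg_eq_add, cos_sub]
  linear_combination sin_sq_add_cos_sq α + sin_sq_add_cos_sq β

theorem arcMat_det_ne_zero {ψ₀ Δψ : ℝ} (h : Δψ ∈ Set.Ioo (-(2 * π)) (2 * π)) :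
    (arcMat ψ₀ Δψ).det ≠ 0 := by
  unfold arcMat
  split_ifs with h0
  · simp [det_Rot]
  · have hcos : cos Δψ ≠ 1 := fun h1 => h0 ((cos_eq_one_iff_of_lt_of_lt h.1 h.2).1 h1)
    have harg : ψ₀ + Δψ - π / 2 - (ψ₀ - π / 2) = Δψ := by ring
    rw [det_smul, det_Rot_sub_Rot, harg, Fintype.card_fin]
    exact mul_ne_zero (by simpa using h0) fun h2 => hcos (by linarith)

theorem integral_Rot_const_rate (ψ₀ Δψ : ℝ) {T : ℝ} (hT : T ≠ 0) (u : Fin 2 → ℝ) :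
    ∫ τ in (0 : ℝ)..T, Rot (ψ₀ + Δψ / T * τ) *ᵥ (T⁻¹ • u) = arcMat ψ₀ Δψ *ᵥ u := by
  by_cases h0 : Δψ = 0
  · simp only [h0, arcMat, zero_div, zero_mul, add_zero, intervalIntegral.integral_const,
      sub_zero, mulVec_smul, smul_smul, mul_inv_cancel₀ hT, one_smul, if_true]
  · rw [intervalIntegral.integral_comp_add_mul (fun θ => Rot θ *ᵥ (T⁻¹ • u))
      (div_ne_zero h0 hT), integral_Rot_mulVec, mul_zero, add_zero, div_mul_cancel₀ _ hT,
      mulVec_smul, smul_smul, arcMat, if_neg h0, smul_mulVec]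
    congr 1
    field_simp

/-- Unique arc transition between two planar states: for states `(x₀, ψ₀)` and `(x_G, ψ_G)`
with `Δψ = ψ_G − ψ₀ ∈ [−π, π)`, there is a unique `u` with `x_G = x₀ + M(ψ₀, Δψ) u`;
consequently, for any duration `T > 0` there is exactly one constant body-frame velocity
`p = (v, ω)` with `ω T = Δψ` and `v T = u` whose induced state trajectory carries
`(x₀, ψ₀)` to `(x_G, ψ_G)` at time `T`. -/
theorem unique_arc_transition (x₀ xG : Fin 2 → ℝ) (ψ₀ ψG : ℝ)
    (hmem : ψG - ψ₀ ∈ Set.Ico (-π) π) :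
    (∃! u : Fin 2 → ℝ, xG = x₀ + arcMat ψ₀ (ψG - ψ₀) *ᵥ u) ∧
    (∀ u : Fin 2 → ℝ, xG = x₀ + arcMat ψ₀ (ψG - ψ₀) *ᵥ u →
      ∀ T : ℝ, 0 < T →
        ∃! p : (Fin 2 → ℝ) × ℝ,
          p.2 * T = ψG - ψ₀ ∧ T • p.1 = u ∧
          x₀ + (∫ τ in (0:ℝ)..T, Rot (ψ₀ + p.2 * τ) *ᵥ p.1) = xG ∧
          ψ₀ + p.2 * T = ψG) := by
  have hdet : (arcMat ψ₀ (ψG - ψ₀)).det ≠ 0 :=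
    arcMat_det_ne_zero ⟨by linarith [hmem.1, pi_pos], by linarith [hmem.2, pi_pos]⟩
  refine ⟨existsUnique_eq_add_mulVec hdet.isUnit x₀ xG, fun u hu T hT => ?_⟩
  have hT0 : T ≠ 0 := hT.ne'
  refine ⟨(T⁻¹ • u, (ψG - ψ₀) / T), ⟨div_mul_cancel₀ _ hT0, smul_inv_smul₀ hT0 u, ?_, ?_⟩, ?_⟩
  · rw [integral_Rot_const_rate ψ₀ (ψG - ψ₀) hT0 u, hu]
  · rw [div_mul_cancel₀ _ hT0, add_sub_cancel]
  · rintro ⟨v, ω⟩ ⟨hω, hv, -, -⟩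
    rw [Prod.mk.injEq, ← hω, ← hv, inv_smul_smul₀ hT0, mul_div_cancel_right₀ _ hT0]
    exact ⟨rfl, rfl⟩
end

section
/- (Balanced diameter for mode switching on the circle.) Let A and B be finite subsets of the unit circle in ℝ² with |A| = |B| = N ≥ 1, such that all points of A ∪ B are pairwise distinct and no two points of A ∪ B are antipodal. Then there exists a unit vector u ∈ ℝ² such that ⟨u, q⟩ ≠ 0 for every q ∈ A ∪ B and the number of points a ∈ A with ⟨u, a⟩ > 0 equals the number of points b ∈ B with ⟨u, b⟩ > 0. -/
/-!
Parametrize unit vectors as `dirVec t = (cos t, sin t)` and let `imbalance A B (dirVec t)` be the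
number of points of `A` minus the number of points of `B` strictly on the positive side of
`dirVec t`. Off the critical angles, at which some point is orthogonal to `dirVec t`, the relation
`dirVec (t + π) = -dirVec t` and `|A| = |B|` give `imbalance (t + π) = -imbalance t`. Two unit
vectors orthogonal to the same direction are equal or antipodal, so at a critical angle only one
point changes side and the imbalance moves by at most one. An interval `[τ, τ + π]` contains
finitely many critical angles, so sweeping it the imbalance must vanish at a non-critical angle.
-/

open Matrix

/-- The Euclidean norm on `ℝ²` (represented as `Fin 2 → ℝ`). -/
noncomputable def norm2 (u : Fin 2 → ℝ) : ℝ := Real.sqrt (u 0 ^ 2 + u 1 ^ 2)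

open Set Real

lemma pos_iff_pos_of_forall_ne_zero {g : ℝ → ℝ} {s s' : ℝ} (hg : ContinuousOn g (uIcc s s'))
    (h : ∀ t ∈ uIcc s s', g t ≠ 0) : 0 < g s ↔ 0 < g s' := by
  constructor
  · intro hs
    by_contra hs'
    obtain ⟨t, ht, hgt⟩ :=
      intermediate_value_uIcc hg (mem_uIcc.mpr (Or.inr ⟨not_lt.mp hs', hs.le⟩))
    exact h t ht hgt
  · intro hs'
    by_contra hs
    obtain ⟨t, ht, hgt⟩ :=
      intermediate_value_uIcc hg (mem_uIcc.mpr (Or.inl ⟨not_lt.mp hs, hs'.le⟩))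
    exact h t ht hgt

lemma abs_ncard_sep_sub_ncard_sep_le_one {α : Type*} {S : Set α} {p p' : α → Prop}
    {x : α} (h : ∀ a ∈ S, a ≠ x → (p a ↔ p' a)) :
    |({a ∈ S | p' a}.ncard : ℤ) - {a ∈ S | p a}.ncard| ≤ 1 := by
  have hdiff : {a ∈ S | p a} \ {x} = {a ∈ S | p' a} \ {x} := by
    ext a
    simp only [mem_sdiff, mem_sep_iff, mem_singleton_iff]
    constructor <;> rintro ⟨⟨ha, hp⟩, hax⟩ <;> simp_all
  have h1 := pred_ncard_le_ncard_sdiff_singleton {a ∈ S | p a} x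
  have h2 := pred_ncard_le_ncard_sdiff_singleton {a ∈ S | p' a} x
  have h3 := ncard_sdiff_singleton_le {a ∈ S | p a} x
  have h4 := ncard_sdiff_singleton_le {a ∈ S | p' a} x
  rw [hdiff] at h1 h3
  rw [abs_le]; constructor <;> omega

lemma exists_Ico_inter_eq_empty {α : Type*} [LinearOrder α] [DenselyOrdered α] {S : Set α}
    (hS : S.Finite) {a c : α} (hac : a < c) : ∃ b ∈ Ioo a c, S ∩ Ico b c = ∅ := by
  obtain ⟨m, hm, hmax⟩ := exists_max_image (insert a (S ∩ Ioo a c)) id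
    ((hS.inter_of_left _).insert a) (insert_nonempty _ _)
  have ham : a ≤ m := hmax a (mem_insert _ _)
  have hmc : m < c := by
    rcases hm with rfl | hm
    exacts [hac, hm.2.2]
  obtain ⟨b, hmb, hbc⟩ := exists_between hmc
  refine ⟨b, ⟨ham.trans_lt hmb, hbc⟩, eq_empty_of_forall_notMem ?_⟩
  rintro x ⟨hxS, hbx, hxc⟩
  have := hmax x (mem_insert_of_mem _ ⟨hxS, (ham.trans_lt hmb).trans_le hbx, hxc⟩)
  exact (hmb.trans_le hbx).not_ge this

lemma exists_eq_zero_of_abs_sub_le_one (f : ℝ → ℤ) {Bad : Set ℝ} (hBad : Bad.Finite) {a b : ℝ}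
    (hab : a ≤ b) (ha : a ∉ Bad) (hb : b ∉ Bad)
    (hjump : ∀ s ∈ Icc a b, ∀ s' ∈ Icc a b, s < s' → s ∉ Bad → s' ∉ Bad →
      (Bad ∩ Icc s s').Subsingleton → |f s' - f s| ≤ 1)
    (hfa : f a ≤ 0) (hfb : 0 ≤ f b) : ∃ t ∈ Icc a b, t ∉ Bad ∧ f t = 0 := by
  induction hk : (Bad ∩ Icc a b).ncard using Nat.strong_induction_on generalizing b with
  | _ k ih =>
    rcases (Bad ∩ Icc a b).eq_empty_or_nonempty with hE | hE
    · rcases hab.eq_or_lt with rfl | hlt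
      · exact ⟨a, left_mem_Icc.mpr le_rfl, ha, le_antisymm hfa hfb⟩
      have := abs_le.mp (hjump a (left_mem_Icc.mpr hab) b (right_mem_Icc.mpr hab) hlt ha hb
        (by rw [hE]; exact subsingleton_empty))
      rcases hfa.eq_or_lt with hfa | hfa
      · exact ⟨a, left_mem_Icc.mpr hab, ha, hfa⟩
      · exact ⟨b, right_mem_Icc.mpr hab, hb, by omega⟩
    -- `c` is the last point of `Bad` before `b`, and `b'` lies just before `c`
    obtain ⟨c, ⟨hcBad, hac, hcb⟩, hcmax⟩ := exists_max_image _ id (hBad.inter_of_left _) hE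
    have hac : a < c := hac.lt_of_ne (fun h ↦ ha (h ▸ hcBad))
    obtain ⟨b', ⟨hab', hb'c⟩, hgap⟩ := exists_Ico_inter_eq_empty hBad hac
    have hb' : b' ∉ Bad := fun h ↦ (eq_empty_iff_forall_notMem.mp hgap) b' ⟨h, le_rfl, hb'c⟩
    have hb'b : b' < b := hb'c.trans_le hcb
    have hsingle : Bad ∩ Icc b' b ⊆ {c} := by
      rintro x ⟨hxBad, hb'x, hxb⟩
      have hxc : x ≤ c := hcmax x ⟨hxBad, hab'.le.trans hb'x, hxb⟩
      by_contra hxc'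
      exact (eq_empty_iff_forall_notMem.mp hgap) x ⟨hxBad, hb'x, hxc.lt_of_ne hxc'⟩
    have hjump' := hjump b' ⟨hab'.le, hb'b.le⟩ b (right_mem_Icc.mpr hab) hb'b hb' hb
      (subsingleton_singleton.anti hsingle)
    rcases lt_or_ge (f b') 0 with hfb' | hfb'
    · exact ⟨b, right_mem_Icc.mpr hab, hb, by rw [abs_le] at hjump'; omega⟩
    have hlt : (Bad ∩ Icc a b').ncard < k := by
      rw [← hk]
      refine ncard_lt_ncard ⟨inter_subset_inter_right _ (Icc_subset_Icc_right hb'b.le), ?_⟩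
        (hBad.inter_of_left _)
      exact fun h ↦ (h ⟨hcBad, hac.le, hcb⟩).2.2.not_gt hb'c
    obtain ⟨t, ht, htBad, hft⟩ := ih _ hlt hab'.le hb'
      (fun s hs s' hs' ↦ hjump s ⟨hs.1, hs.2.trans hb'b.le⟩ s' ⟨hs'.1, hs'.2.trans hb'b.le⟩)
      hfb' rfl
    exact ⟨t, ⟨ht.1, ht.2.trans hb'b.le⟩, htBad, hft⟩

section Imbalance

variable {n : ℕ}

noncomputable def imbalance (A B : Set (Fin n → ℝ)) (u : Fin n → ℝ) : ℤ :=
  {a ∈ A | 0 < u ⬝ᵥ a}.ncard - {b ∈ B | 0 < u ⬝ᵥ b}.ncard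

variable {A B : Set (Fin n → ℝ)}

lemma ncard_sep_neg_dotProduct_pos_add {S : Set (Fin n → ℝ)} (hS : S.Finite) {u : Fin n → ℝ}
    (hu : ∀ q ∈ S, u ⬝ᵥ q ≠ 0) :
    {q ∈ S | 0 < -u ⬝ᵥ q}.ncard + {q ∈ S | 0 < u ⬝ᵥ q}.ncard = S.ncard := by
  rw [← ncard_union_eq _ (hS.subset (sep_subset _ _)) (hS.subset (sep_subset _ _))]
  · congr 1
    ext q
    simp only [mem_union, mem_sep_iff, neg_dotProduct, neg_pos]
    constructor
    · rintro (⟨hq, -⟩ | ⟨hq, -⟩) <;> exact hq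
    · intro hq
      rcases (hu q hq).lt_or_gt with h | h
      exacts [Or.inl ⟨hq, h⟩, Or.inr ⟨hq, h⟩]
  · rw [Set.disjoint_left]
    rintro q ⟨-, hneg⟩ ⟨-, hpos⟩
    rw [neg_dotProduct] at hneg
    linarith

lemma imbalance_neg (hA : A.Finite) (hB : B.Finite) (hcard : A.ncard = B.ncard) {u : Fin n → ℝ}
    (hu : ∀ q ∈ A ∪ B, u ⬝ᵥ q ≠ 0) : imbalance A B (-u) = -imbalance A B u := by
  have hA' := ncard_sep_neg_dotProduct_pos_add hA fun a ha ↦ hu a (Or.inl ha)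
  have hB' := ncard_sep_neg_dotProduct_pos_add hB fun b hb ↦ hu b (Or.inr hb)
  unfold imbalance
  omega

lemma abs_imbalance_sub_le_one (hAB : Disjoint A B) {u u' x : Fin n → ℝ}
    (h : ∀ q ∈ A ∪ B, q ≠ x → (0 < u ⬝ᵥ q ↔ 0 < u' ⬝ᵥ q)) :
    |imbalance A B u' - imbalance A B u| ≤ 1 := by
  have hA' := abs_ncard_sep_sub_ncard_sep_le_one fun a ha ↦ h a (Or.inl ha)
  have hB' := abs_ncard_sep_sub_ncard_sep_le_one fun b hb ↦ h b (Or.inr hb)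
  unfold imbalance
  rw [abs_le] at *
  by_cases hxA : x ∈ A
  · have hB'' : {b ∈ B | 0 < u ⬝ᵥ b} = {b ∈ B | 0 < u' ⬝ᵥ b} :=
      sep_ext_iff.mpr fun b hb ↦
        h b (Or.inr hb) (ne_of_mem_of_not_mem hb (disjoint_left.mp hAB hxA))
    rw [hB''] at *
    constructor <;> linarith
  · have hA'' : {a ∈ A | 0 < u ⬝ᵥ a} = {a ∈ A | 0 < u' ⬝ᵥ a} :=
      sep_ext_iff.mpr fun a ha ↦ h a (Or.inl ha) (ne_of_mem_of_not_mem ha hxA)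
    rw [hA''] at *
    constructor <;> linarith

end Imbalance

noncomputable def dirVec (t : ℝ) : Fin 2 → ℝ := ![cos t, sin t]

lemma dirVec_dotProduct (t : ℝ) (q : Fin 2 → ℝ) : dirVec t ⬝ᵥ q = cos t * q 0 + sin t * q 1 := by
  simp [dirVec, dotProduct, Fin.sum_univ_two]

lemma norm2_eq_one_iff {q : Fin 2 → ℝ} : norm2 q = 1 ↔ q 0 ^ 2 + q 1 ^ 2 = 1 := sqrt_eq_one

lemma norm2_dirVec (t : ℝ) : norm2 (dirVec t) = 1 := by
  simp [norm2_eq_one_iff, dirVec]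

lemma dirVec_add_pi (t : ℝ) : dirVec (t + π) = -dirVec t := by
  ext i; fin_cases i <;> simp [dirVec]

lemma continuous_dirVec_dotProduct (q : Fin 2 → ℝ) : Continuous fun t ↦ dirVec t ⬝ᵥ q := by
  simp only [dirVec_dotProduct]; fun_prop

lemma eq_dirVec_add_pi_div_two_or_eq_neg {t : ℝ} {q : Fin 2 → ℝ} (hq : norm2 q = 1)
    (h : dirVec t ⬝ᵥ q = 0) : q = dirVec (t + π / 2) ∨ q = -dirVec (t + π / 2) := by
  rw [norm2_eq_one_iff] at hq
  rw [dirVec_dotProduct] at h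
  set σ := -sin t * q 0 + cos t * q 1
  have h0 : q 0 = -σ * sin t := by linear_combination cos t * h - q 0 * (sin_sq_add_cos_sq t)
  have h1 : q 1 = σ * cos t := by linear_combination sin t * h - q 1 * (sin_sq_add_cos_sq t)
  have hσ : σ ^ 2 = 1 := by
    linear_combination hq - σ ^ 2 * sin_sq_add_cos_sq t - (q 0 - σ * sin t) * h0
      - (q 1 + σ * cos t) * h1
  rcases sq_eq_one_iff.mp hσ with hσ | hσ <;> [left; right] <;>
    ext i <;> fin_cases i <;> simp [dirVec, cos_add_pi_div_two, sin_add_pi_div_two, h0, h1, hσ]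

lemma eq_or_eq_neg_of_dirVec_dotProduct_eq_zero {t : ℝ} {q q' : Fin 2 → ℝ} (hq : norm2 q = 1)
    (hq' : norm2 q' = 1) (h : dirVec t ⬝ᵥ q = 0) (h' : dirVec t ⬝ᵥ q' = 0) : q' = q ∨ q' = -q := by
  rcases eq_dirVec_add_pi_div_two_or_eq_neg hq h with rfl | rfl <;>
    rcases eq_dirVec_add_pi_div_two_or_eq_neg hq' h' with rfl | rfl <;> simp

lemma eq_of_dirVec_dotProduct_eq_zero {q : Fin 2 → ℝ} (hq : norm2 q = 1) {t t' : ℝ}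
    (h : dirVec t ⬝ᵥ q = 0) (h' : dirVec t' ⬝ᵥ q = 0) (htt' : |t' - t| < π) : t = t' := by
  rw [norm2_eq_one_iff] at hq
  rw [dirVec_dotProduct] at h h'
  have hsin : sin (t' - t) = 0 := by
    rw [sin_sub]
    linear_combination (q 0 * sin t' - q 1 * cos t') * h + (q 1 * cos t - q 0 * sin t) * h'
      - (sin t' * cos t - cos t' * sin t) * hq
  rw [abs_lt] at htt'
  linarith [(sin_eq_zero_iff_of_lt_of_lt htt'.1 htt'.2).mp hsin]

def criticalAngles (Q : Set (Fin 2 → ℝ)) : Set ℝ := {t | ∃ q ∈ Q, dirVec t ⬝ᵥ q = 0}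

lemma finite_criticalAngles_inter_Icc {Q : Set (Fin 2 → ℝ)} (hQ : Q.Finite)
    (hcirc : ∀ q ∈ Q, norm2 q = 1) (a : ℝ) : (criticalAngles Q ∩ Icc a (a + π)).Finite := by
  have hzeros (q) (hq : q ∈ Q) : {t ∈ Icc a (a + π) | dirVec t ⬝ᵥ q = 0}.Finite := by
    have hsub : {t ∈ Ico a (a + π) | dirVec t ⬝ᵥ q = 0}.Subsingleton := by
      rintro t ⟨ht, h⟩ t' ⟨ht', h'⟩
      refine eq_of_dirVec_dotProduct_eq_zero (hcirc q hq) h h' (abs_sub_lt_iff.mpr ?_)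
      simp only [mem_Ico] at ht ht'
      constructor <;> linarith
    refine (hsub.finite.insert (a + π)).subset ?_
    rintro t ⟨ht, h⟩
    rcases ht.2.eq_or_lt with rfl | hlt
    · exact mem_insert _ _
    · exact mem_insert_of_mem _ ⟨⟨ht.1, hlt⟩, h⟩
  refine (hQ.biUnion hzeros).subset ?_
  rintro t ⟨⟨q, hq, ht⟩, hI⟩
  exact mem_biUnion hq ⟨hI, ht⟩

lemma exists_notMem_criticalAngles {Q : Set (Fin 2 → ℝ)} (hQ : Q.Finite)
    (hcirc : ∀ q ∈ Q, norm2 q = 1) : ∃ t, t ∉ criticalAngles Q := by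
  have hinf : (Icc 0 (0 + π)).Infinite := Icc_infinite (by linarith [pi_pos])
  obtain ⟨t, htI, ht⟩ := hinf.exists_notMem_finite (finite_criticalAngles_inter_Icc hQ hcirc 0)
  exact ⟨t, fun h ↦ ht ⟨h, htI⟩⟩

lemma notMem_criticalAngles {Q : Set (Fin 2 → ℝ)} {t : ℝ} :
    t ∉ criticalAngles Q ↔ ∀ q ∈ Q, dirVec t ⬝ᵥ q ≠ 0 := by
  simp [criticalAngles]

lemma add_pi_mem_criticalAngles_iff {Q : Set (Fin 2 → ℝ)} {t : ℝ} :
    t + π ∈ criticalAngles Q ↔ t ∈ criticalAngles Q := by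
  simp only [criticalAngles, mem_ofPred_eq, dirVec_add_pi, neg_dotProduct, neg_eq_zero]

lemma exists_forall_dirVec_dotProduct_ne_zero {Q : Set (Fin 2 → ℝ)}
    (hcirc : ∀ q ∈ Q, norm2 q = 1) (hanti : ∀ q ∈ Q, ∀ q' ∈ Q, q' ≠ -q) {s s' : ℝ}
    (hsub : (criticalAngles Q ∩ Icc s s').Subsingleton) :
    ∃ x, ∀ q ∈ Q, q ≠ x → ∀ t ∈ Icc s s', dirVec t ⬝ᵥ q ≠ 0 := by
  by_cases h : ∃ x ∈ Q, ∃ c ∈ Icc s s', dirVec c ⬝ᵥ x = 0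
  · obtain ⟨x, hx, c, hc, hcx⟩ := h
    refine ⟨x, fun q hq hqx t ht htq ↦ ?_⟩
    obtain rfl : t = c := hsub ⟨⟨q, hq, htq⟩, ht⟩ ⟨⟨x, hx, hcx⟩, hc⟩
    rcases eq_or_eq_neg_of_dirVec_dotProduct_eq_zero (hcirc x hx) (hcirc q hq) hcx htq with h | h
    exacts [hqx h, hanti x hx q hq h]
  · push Not at h
    exact ⟨0, fun q hq _ ↦ h q hq⟩

section Sweep

variable {A B : Set (Fin 2 → ℝ)}

lemma abs_imbalance_dirVec_sub_le_one (hAB : Disjoint A B) (hcirc : ∀ q ∈ A ∪ B, norm2 q = 1)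
    (hanti : ∀ q ∈ A ∪ B, ∀ q' ∈ A ∪ B, q' ≠ -q) {s s' : ℝ} (hss' : s ≤ s')
    (hsub : (criticalAngles (A ∪ B) ∩ Icc s s').Subsingleton) :
    |imbalance A B (dirVec s') - imbalance A B (dirVec s)| ≤ 1 := by
  obtain ⟨x, hx⟩ := exists_forall_dirVec_dotProduct_ne_zero hcirc hanti hsub
  refine abs_imbalance_sub_le_one hAB (x := x) fun q hq hqx ↦ ?_
  rw [← uIcc_of_le hss'] at hx
  exact pos_iff_pos_of_forall_ne_zero (continuous_dirVec_dotProduct q).continuousOn (hx q hq hqx)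

lemma exists_imbalance_dirVec_eq_zero (hA : A.Finite) (hB : B.Finite) (hcard : A.ncard = B.ncard)
    (hAB : Disjoint A B) (hcirc : ∀ q ∈ A ∪ B, norm2 q = 1)
    (hanti : ∀ q ∈ A ∪ B, ∀ q' ∈ A ∪ B, q' ≠ -q) :
    ∃ t, t ∉ criticalAngles (A ∪ B) ∧ imbalance A B (dirVec t) = 0 := by
  set f : ℝ → ℤ := fun t ↦ imbalance A B (dirVec t)
  have hflip (t) (ht : t ∉ criticalAngles (A ∪ B)) : f (t + π) = -f t := by
    simp only [f, dirVec_add_pi]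
    exact imbalance_neg hA hB hcard (notMem_criticalAngles.mp ht)
  obtain ⟨τ, hτ, hfτ⟩ : ∃ τ ∉ criticalAngles (A ∪ B), f τ ≤ 0 := by
    obtain ⟨τ, hτ⟩ := exists_notMem_criticalAngles (hA.union hB) hcirc
    rcases le_total (f τ) 0 with h | h
    · exact ⟨τ, hτ, h⟩
    · exact ⟨τ + π, add_pi_mem_criticalAngles_iff.not.mpr hτ, by rw [hflip τ hτ]; omega⟩
  obtain ⟨t, ht, htBad, hft⟩ := exists_eq_zero_of_abs_sub_le_one f
    (finite_criticalAngles_inter_Icc (hA.union hB) hcirc τ) (by linarith [pi_pos])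
    (fun h ↦ hτ h.1) (fun h ↦ add_pi_mem_criticalAngles_iff.not.mpr hτ h.1)
    (fun s hs s' hs' hss' _ _ hsub ↦ abs_imbalance_dirVec_sub_le_one hAB hcirc hanti hss'.le
      (hsub.anti fun x ⟨hx, hxs⟩ ↦ ⟨⟨hx, Icc_subset_Icc hs.1 hs'.2 hxs⟩, hxs⟩))
    hfτ (by rw [hflip τ hτ]; omega)
  exact ⟨t, fun h ↦ htBad ⟨h, ht⟩, hft⟩

end Sweep

theorem balanced_diameter_general (N : ℕ) (A B : Set (Fin 2 → ℝ))
    (hAfin : A.Finite) (hBfin : B.Finite)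
    (hAcirc : ∀ a ∈ A, norm2 a = 1) (hBcirc : ∀ b ∈ B, norm2 b = 1)
    (hAcard : A.ncard = N) (hBcard : B.ncard = N)
    (hdisj : Disjoint A B)
    (hanti : ∀ q ∈ A ∪ B, ∀ q' ∈ A ∪ B, q' ≠ -q) :
    ∃ u : Fin 2 → ℝ, norm2 u = 1 ∧
      (∀ q ∈ A ∪ B, u ⬝ᵥ q ≠ 0) ∧
      {a ∈ A | 0 < u ⬝ᵥ a}.ncard = {b ∈ B | 0 < u ⬝ᵥ b}.ncard := by
  obtain ⟨t, ht, hbalanced⟩ := exists_imbalance_dirVec_eq_zero hAfin hBfin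
    (hAcard.trans hBcard.symm) hdisj (fun q hq ↦ hq.elim (hAcirc q) (hBcirc q)) hanti
  refine ⟨dirVec t, norm2_dirVec t, notMem_criticalAngles.mp ht, ?_⟩
  unfold imbalance at hbalanced
  omega

/-- Balanced diameter for mode switching on the circle: if `A` and `B` are finite subsets of
the unit circle in `ℝ²` with `|A| = |B| = N ≥ 1`, all points of `A ∪ B` pairwise distinct
and no two of them antipodal, then there is a unit vector `u` with `⟨u, q⟩ ≠ 0` for every
`q ∈ A ∪ B` such that the number of `a ∈ A` with `⟨u, a⟩ > 0` equals the number of `b ∈ B`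
with `⟨u, b⟩ > 0`. -/
theorem balanced_diameter (N : ℕ) (hN : 1 ≤ N) (A B : Set (Fin 2 → ℝ))
    (hAfin : A.Finite) (hBfin : B.Finite)
    (hAcirc : ∀ a ∈ A, norm2 a = 1) (hBcirc : ∀ b ∈ B, norm2 b = 1)
    (hAcard : A.ncard = N) (hBcard : B.ncard = N)
    (hdisj : Disjoint A B)
    (hanti : ∀ q ∈ A ∪ B, ∀ q' ∈ A ∪ B, q' ≠ -q) :
    ∃ u : Fin 2 → ℝ, norm2 u = 1 ∧
      (∀ q ∈ A ∪ B, u ⬝ᵥ q ≠ 0) ∧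
      {a ∈ A | 0 < u ⬝ᵥ a}.ncard = {b ∈ B | 0 < u ⬝ᵥ b}.ncard :=
  balanced_diameter_general N A B hAfin hBfin hAcirc hBcirc hAcard hBcard hdisj hanti
end

section
/- (Invertibility of the integrated 3D rotation.) Let ω ∈ ℝ³ and t̄ > 0 satisfy ‖ω‖₂ · t̄ ∈ [0, π]. Then the 3×3 matrix ∫₀^{t̄} exp(s [ω]ₓ) ds is invertible (in particular, for ω = 0 it equals t̄ · I). -/
open Matrix NormedSpace

/-- The Euclidean norm on `ℝ³` (represented as `Fin 3 → ℝ`). -/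
noncomputable def norm3 (u : Fin 3 → ℝ) : ℝ := Real.sqrt (u 0 ^ 2 + u 1 ^ 2 + u 2 ^ 2)

/-- The cross-product (skew-symmetric) matrix `[ω]ₓ` of `ω ∈ ℝ³`, satisfying
`[ω]ₓ u = ω × u` for all `u`. -/
def skew (ω : Fin 3 → ℝ) : Matrix (Fin 3) (Fin 3) ℝ :=
  !![0, -ω 2, ω 1; ω 2, 0, -ω 0; -ω 1, ω 0, 0]

/-!
With `K = [ω]ₓ` and `θ = ‖ω‖` one has `K³ = -θ² K`, so `exp (s K)` obeys Rodrigues' formula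
`exp (s K) = 1 + (sin (θ s) / θ) K + ((1 - cos (θ s)) / θ²) K²`. Integrating it,
`∫₀ᵀ exp (s K) ds = T + A K + B K²` with `A = (1 - cos (θ T)) / θ²` and
`B = (θ T - sin (θ T)) / θ³`, whose determinant is `T ((T - B θ²)² + A² θ²)`: the eigenvalues
are `T` on `ω` and `T - B θ² ± i A θ` on `ω⊥`. For `0 < θ T ≤ π` we have `A > 0`, so the
determinant is positive.
-/

section Trigonometric

open Real

variable {θ : ℝ} (hθ : θ ≠ 0) (u : ℝ)
include hθ

theorem hasDerivAt_sin_mul_div :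
    HasDerivAt (fun v => sin (θ * v) / θ) (cos (θ * u)) u :=
  ((((hasDerivAt_id' u).const_mul θ).sin).div_const θ).congr_deriv (by field_simp)

theorem hasDerivAt_one_sub_cos_mul_div :
    HasDerivAt (fun v => (1 - cos (θ * v)) / θ ^ 2) (sin (θ * u) / θ) u :=
  (((((hasDerivAt_id' u).const_mul θ).cos).const_sub 1).div_const (θ ^ 2)).congr_deriv
    (by field_simp)

theorem hasDerivAt_mul_sub_sin_mul_div :
    HasDerivAt (fun v => (θ * v - sin (θ * v)) / θ ^ 3) ((1 - cos (θ * u)) / θ ^ 2) u := by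
  have hlin := (hasDerivAt_id' u).const_mul θ
  exact ((hlin.sub hlin.sin).div_const (θ ^ 3)).congr_deriv (by field_simp)

end Trigonometric

section BanachAlgebra

variable {𝔸 : Type*} [NormedRing 𝔸] [NormedAlgebra ℝ 𝔸] [CompleteSpace 𝔸]

theorem eq_exp_smul_of_hasDerivAt {K : 𝔸} {R : ℝ → 𝔸} (hR : ∀ u, HasDerivAt R (K * R u) u)
    (hR0 : R 0 = 1) (s : ℝ) : R s = exp (s • K) := by
  have hconst : ∀ u, HasDerivAt (fun v => exp (v • -K) * R v) 0 u := fun u => by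
    refine ((hasDerivAt_exp_smul_const (-K) u).mul (hR u)).congr_deriv ?_
    rw [mul_assoc, neg_mul, mul_neg, neg_add_cancel]
  have h : exp (s • -K) * R s = 1 := by
    simpa [hR0] using is_const_of_deriv_eq_zero (fun u => (hconst u).differentiableAt)
      (fun u => (hconst u).deriv) s 0
  have hinv : exp (s • K) * exp (s • -K) = 1 := by
    rw [← exp_add_of_commute_of_mem_ball (𝕂 := ℝ)
      (((Commute.refl K).neg_right.smul_left s).smul_right s)
      (by simp [expSeries_radius_eq_top]) (by simp [expSeries_radius_eq_top]),
      ← smul_add, add_neg_cancel, smul_zero, exp_zero]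
  calc R s = exp (s • K) * exp (s • -K) * R s := by rw [hinv, one_mul]
    _ = exp (s • K) := by rw [mul_assoc, h, mul_one]

theorem continuous_exp_smul (K : 𝔸) : Continuous fun s : ℝ => exp (s • K) :=
  continuous_iff_continuousAt.2 fun s => (hasDerivAt_exp_smul_const K s).continuousAt

variable {K : 𝔸} {θ : ℝ} (hθ : θ ≠ 0) (hK : K * K * K = -θ ^ 2 • K)
include hθ hK

theorem exp_smul_eq_of_mul_mul_self_eq (s : ℝ) :
    exp (s • K) =
      1 + (Real.sin (θ * s) / θ) • K + ((1 - Real.cos (θ * s)) / θ ^ 2) • (K * K) := by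
  let R (u : ℝ) : 𝔸 :=
    1 + (Real.sin (θ * u) / θ) • K + ((1 - Real.cos (θ * u)) / θ ^ 2) • (K * K)
  refine (eq_exp_smul_of_hasDerivAt (R := R) (fun u => ?_) (by simp [R]) s).symm
  refine ((((hasDerivAt_sin_mul_div hθ u).smul_const K).const_add 1).add
    ((hasDerivAt_one_sub_cos_mul_div hθ u).smul_const (K * K))).congr_deriv ?_
  have hcoeff : (1 - Real.cos (θ * u)) / θ ^ 2 * -θ ^ 2 = Real.cos (θ * u) - 1 := by
    field_simp
    ring
  rw [mul_add, mul_add, mul_one, mul_smul_comm, mul_smul_comm, ← mul_assoc, hK, smul_smul,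
    hcoeff]
  module

theorem intervalIntegral_exp_smul_eq_of_mul_mul_self_eq (T : ℝ) :
    ∫ s in (0 : ℝ)..T, exp (s • K) =
      T • 1 + ((1 - Real.cos (θ * T)) / θ ^ 2) • K
        + ((θ * T - Real.sin (θ * T)) / θ ^ 3) • (K * K) := by
  have hderiv : ∀ u : ℝ, HasDerivAt
      (fun v => v • (1 : 𝔸) + ((1 - Real.cos (θ * v)) / θ ^ 2) • K
        + ((θ * v - Real.sin (θ * v)) / θ ^ 3) • (K * K)) (exp (u • K)) u := fun u => by
    rw [exp_smul_eq_of_mul_mul_self_eq hθ hK u]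
    exact ((((hasDerivAt_id' u).smul_const (1 : 𝔸)).add
      ((hasDerivAt_one_sub_cos_mul_div hθ u).smul_const K)).add
      ((hasDerivAt_mul_sub_sin_mul_div hθ u).smul_const (K * K))).congr_deriv (by rw [one_smul])
  rw [intervalIntegral.integral_eq_sub_of_hasDerivAt (fun u _ => hderiv u)
    ((continuous_exp_smul K).intervalIntegrable _ _)]
  simp

end BanachAlgebra

/-- Any normed structure computes the same Bochner integral; the `L^∞` operator norm is used
because it makes matrices a Banach algebra. -/
theorem Matrix.of_intervalIntegral_exp_smul_apply_eq {n : Type*} [Fintype n] [DecidableEq n]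
    {K : Matrix n n ℝ} {θ : ℝ} (hθ : θ ≠ 0) (hK : K * K * K = -θ ^ 2 • K) (T : ℝ) :
    Matrix.of (fun i j => ∫ s in (0 : ℝ)..T, exp (s • K) i j) =
      T • 1 + ((1 - Real.cos (θ * T)) / θ ^ 2) • K
        + ((θ * T - Real.sin (θ * T)) / θ ^ 3) • (K * K) := by
  let : NormedRing (Matrix n n ℝ) := Matrix.linftyOpNormedRing
  let : NormedAlgebra ℝ (Matrix n n ℝ) := Matrix.linftyOpNormedAlgebra
  rw [← intervalIntegral_exp_smul_eq_of_mul_mul_self_eq hθ hK T]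
  ext i j
  exact (entryLinearMap ℝ ℝ i j).toContinuousLinearMap.intervalIntegral_comp_comm
    ((continuous_exp_smul K).intervalIntegrable _ _)

section Skew

theorem norm3_sq (ω : Fin 3 → ℝ) : norm3 ω ^ 2 = ω 0 ^ 2 + ω 1 ^ 2 + ω 2 ^ 2 :=
  Real.sq_sqrt (by positivity)

theorem norm3_pos {ω : Fin 3 → ℝ} (hω : ω ≠ 0) : 0 < norm3 ω := by
  refine Real.sqrt_pos.2 ?_
  contrapose! hω
  ext i
  fin_cases i <;> simp <;> nlinarith [sq_nonneg (ω 0), sq_nonneg (ω 1), sq_nonneg (ω 2)]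

theorem skew_zero : skew 0 = 0 := by
  ext i j
  fin_cases i <;> fin_cases j <;> simp [skew]

theorem skew_mul_skew_mul_skew (ω : Fin 3 → ℝ) :
    skew ω * skew ω * skew ω = -norm3 ω ^ 2 • skew ω := by
  rw [norm3_sq]
  ext i j
  fin_cases i <;> fin_cases j <;> simp [skew, Matrix.mul_apply, Fin.sum_univ_succ] <;> ring

theorem det_smul_one_add_smul_skew_add_smul_skew_mul_skew (ω : Fin 3 → ℝ) (c a b : ℝ) :
    (c • 1 + a • skew ω + b • (skew ω * skew ω)).det =
      c * ((c - b * norm3 ω ^ 2) ^ 2 + a ^ 2 * norm3 ω ^ 2) := by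
  rw [norm3_sq]
  simp [skew, Matrix.det_fin_three]
  ring

end Skew

/-- Invertibility of the integrated 3D rotation: if `‖ω‖₂ · T ∈ [0, π]` with `T > 0`, then
the (entrywise) integral `∫₀ᵀ exp (s [ω]ₓ) ds` is an invertible 3×3 matrix; in particular,
for `ω = 0` it equals `T • I`. -/
theorem integrated_rotation_isUnit (ω : Fin 3 → ℝ) (T : ℝ) (hT : 0 < T)
    (hbound : norm3 ω * T ∈ Set.Icc 0 Real.pi) :
    IsUnit (Matrix.of fun i j : Fin 3 => ∫ s in (0:ℝ)..T, exp (s • skew ω) i j) ∧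
    (ω = 0 →
      (Matrix.of fun i j : Fin 3 => ∫ s in (0:ℝ)..T, exp (s • skew ω) i j)
        = T • (1 : Matrix (Fin 3) (Fin 3) ℝ)) := by
  rcases eq_or_ne ω 0 with rfl | hω
  · have hM : (Matrix.of fun i j : Fin 3 => ∫ s in (0:ℝ)..T, exp (s • skew 0) i j)
        = T • (1 : Matrix (Fin 3) (Fin 3) ℝ) := by
      ext i j
      simp [skew_zero]
    refine ⟨?_, fun _ => hM⟩
    rw [hM, isUnit_iff_isUnit_det, det_smul, det_one, isUnit_iff_ne_zero]
    positivity
  · have hθ := norm3_pos hω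
    have hcos : Real.cos (norm3 ω * T) < 1 := by
      simpa using Real.cos_lt_cos_of_nonneg_of_le_pi le_rfl hbound.2 (mul_pos hθ hT)
    have hA : 0 < (1 - Real.cos (norm3 ω * T)) / norm3 ω ^ 2 :=
      div_pos (sub_pos.2 hcos) (by positivity)
    refine ⟨?_, fun h => absurd h hω⟩
    rw [Matrix.of_intervalIntegral_exp_smul_apply_eq hθ.ne' (skew_mul_skew_mul_skew ω),
      isUnit_iff_isUnit_det, det_smul_one_add_smul_skew_add_smul_skew_mul_skew,
      isUnit_iff_ne_zero]
    positivity
end
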